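/- arXiv:2411.00482 — 3 statements merged into one kernel-verified Lean document; each statement's English description precedes it below -/
import Mathlib

section
/- Let F : ℝⁿ → S^m (symmetric m×m real matrices) be continuously differentiable on the positive orthant, monotonically non-increasing (F'(x)δ ⪯ 0 in the Loewner order for all x > 0 and δ ≥ 0), and convex (F(y) - F(x) ⪰ F'(x)(y - x)). Fix x in the positive orthant. If for every j ∈ {1,…,n} the matrix F'(x)(e_j' - e_j) is not negative semidefinite (where e_j is the j-th unit vector and e_j' = 𝟙 - e_j), then for every d ∈ ℝⁿ with d ≠ 0 one has ‖F'(x)d‖₂ ≥ λ_x ‖d‖_∞, where λ_x := min_{j=1,…,n} λ_max(F'(x)(e_j' - e_j)) > 0, and ‖·‖₂ denotes the spectral norm. In particular F'(x) is injective. -/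
open Matrix

attribute [local instance] Matrix.frobeniusNormedAddCommGroup Matrix.frobeniusNormedSpace

/-- Largest eigenvalue (for symmetric matrices, the supremum of the spectrum). -/
noncomputable def lamMax {m : ℕ} (A : Matrix (Fin m) (Fin m) ℝ) : ℝ :=
  sSup (spectrum ℝ A)

/-- Spectral norm of a symmetric matrix: `max (λ_max A) (λ_max (-A))`. -/
noncomputable def specNorm {m : ℕ} (A : Matrix (Fin m) (Fin m) ℝ) : ℝ :=
  max (lamMax A) (lamMax (-A))

/-- Loewner order: `Loewner A B` means `A ⪯ B`. -/
def Loewner {m : ℕ} (A B : Matrix (Fin m) (Fin m) ℝ) : Prop :=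
  (B - A).PosSemidef

/-- The `j`-th standard unit vector `e_j`. -/
noncomputable def eVec (n : ℕ) (j : Fin n) : Fin n → ℝ := Pi.single j (1:ℝ)

/-- The negated unit vector `e_j' = 𝟙 - e_j`. -/
noncomputable def eVec' (n : ℕ) (j : Fin n) : Fin n → ℝ := fun i => 1 - eVec n j i

/-- Maximum norm `‖d‖_∞`. -/
noncomputable def infNorm {n : ℕ} (d : Fin n → ℝ) : ℝ := ⨆ i, |d i|

/-! Monotonicity makes every `F'(x)d` symmetric (split `d = d⁺ - d⁻`), and
`λ_max(A) > 0` for `A = F'(x)(e_j' - e_j)` since otherwise `A ⪯ 0`.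
Given `d`, pick `k` with `|d_k| = ‖d‖_∞` and, replacing `d` by `-d`, assume `d_k ≥ 0`. Then
`δ = d + d_k (e_k' - e_k) ≥ 0`, so `F'(x)δ ⪯ 0`, i.e. `d_k F'(x)(e_k' - e_k) ⪯ -F'(x)d`.
As `λ_max` is monotone and positively homogeneous in the Loewner order,
`‖d‖_∞ λ_x ≤ λ_max(-F'(x)d) ≤ ‖F'(x)d‖₂`. -/

open scoped MatrixOrder

section SpectralBounds

variable {m : ℕ} {A B : Matrix (Fin m) (Fin m) ℝ}

lemma Matrix.nonempty_of_not_posSemidef {ι : Type*} [Fintype ι] {A : Matrix ι ι ℝ}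
    (h : ¬A.PosSemidef) : Nonempty ι := by
  by_contra hι
  rw [not_nonempty_iff] at hι
  exact h (Subsingleton.elim 0 A ▸ PosSemidef.zero)

lemma spectrum_nonempty_of_isHermitian [Nonempty (Fin m)] (hA : A.IsHermitian) :
    (spectrum ℝ A).Nonempty := by
  rw [hA.spectrum_real_eq_range_eigenvalues]
  exact Set.range_nonempty _

lemma le_lamMax {r : ℝ} (hr : r ∈ spectrum ℝ A) : r ≤ lamMax A :=
  le_csSup finite_real_spectrum.bddAbove hr

lemma le_algebraMap_lamMax (hA : A.IsHermitian) : A ≤ algebraMap ℝ _ (lamMax A) :=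
  le_algebraMap_of_spectrum_le (fun _ => le_lamMax) hA.isSelfAdjoint

lemma lamMax_le_of_le_algebraMap [Nonempty (Fin m)] (hA : A.IsHermitian) {r : ℝ}
    (h : A ≤ algebraMap ℝ _ r) : lamMax A ≤ r :=
  csSup_le (spectrum_nonempty_of_isHermitian hA)
    ((le_algebraMap_iff_spectrum_le hA.isSelfAdjoint).1 h)

lemma lamMax_mono [Nonempty (Fin m)] (hA : A.IsHermitian) (hB : B.IsHermitian) (h : A ≤ B) :
    lamMax A ≤ lamMax B :=
  lamMax_le_of_le_algebraMap hA (h.trans (le_algebraMap_lamMax hB))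

lemma lamMax_smul [Nonempty (Fin m)] (hA : A.IsHermitian) {τ : ℝ} (hτ : 0 ≤ τ) :
    lamMax (τ • A) = τ * lamMax A := by
  rw [lamMax, spectrum.smul_eq_smul _ _ (spectrum_nonempty_of_isHermitian hA),
    Real.sSup_smul_of_nonneg hτ, lamMax, smul_eq_mul]

lemma lamMax_zero [Nonempty (Fin m)] : lamMax (0 : Matrix (Fin m) (Fin m) ℝ) = 0 := by
  rw [lamMax, spectrum.zero_eq, csSup_singleton]

lemma lamMax_pos_of_not_posSemidef_neg (hA : A.IsHermitian) (h : ¬(-A).PosSemidef) :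
    0 < lamMax A := by
  contrapose! h
  have hA0 : A ≤ 0 := by
    simpa using le_algebraMap_of_spectrum_le (r := 0)
      (fun _ hr => (le_lamMax hr).trans h) hA.isSelfAdjoint
  exact nonneg_iff_posSemidef.1 (neg_nonneg.2 hA0)

lemma specNorm_neg : specNorm (-A) = specNorm A := by
  rw [specNorm, specNorm, neg_neg, max_comm]

lemma specNorm_zero [Nonempty (Fin m)] : specNorm (0 : Matrix (Fin m) (Fin m) ℝ) = 0 := by
  rw [specNorm, neg_zero, lamMax_zero, max_self]

end SpectralBounds

section InfNorm

variable {n : ℕ}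

lemma abs_le_infNorm (d : Fin n → ℝ) (i : Fin n) : |d i| ≤ infNorm d :=
  le_ciSup (f := fun i => |d i|) (Set.finite_range _).bddAbove i

lemma exists_infNorm_eq_abs [Nonempty (Fin n)] (d : Fin n → ℝ) :
    ∃ k, infNorm d = |d k| ∧ ∀ i, |d i| ≤ |d k| := by
  obtain ⟨k, hk⟩ := Finite.exists_max fun i => |d i|
  exact ⟨k, le_antisymm (ciSup_le hk) (abs_le_infNorm d k), hk⟩

lemma infNorm_pos {d : Fin n → ℝ} (hd : d ≠ 0) : 0 < infNorm d := by
  obtain ⟨i, hi⟩ := Function.ne_iff.1 hd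
  exact (abs_pos.2 hi).trans_le (abs_le_infNorm d i)

lemma nonneg_add_smul_eVec'_sub_eVec {d : Fin n → ℝ} {k : Fin n} (h : ∀ i, -d i ≤ d k) :
    0 ≤ d + d k • (eVec' n k - eVec n k) := by
  intro i
  rcases eq_or_ne i k with rfl | hik
  · simp [eVec', eVec]
  · simpa [eVec', eVec, Pi.single_eq_of_ne hik, neg_le_iff_add_nonneg'] using h i

end InfNorm

section Nonincreasing

variable {n m : ℕ} {L : (Fin n → ℝ) →ₗ[ℝ] Matrix (Fin m) (Fin m) ℝ}

lemma isHermitian_of_nonpos_of_nonneg (hL : ∀ δ, 0 ≤ δ → L δ ≤ 0) (d : Fin n → ℝ) :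
    (L d).IsHermitian := by
  have hpos : ∀ δ, 0 ≤ δ → IsSelfAdjoint (L δ) := fun δ hδ => by
    simpa using (IsSelfAdjoint.of_nonneg (neg_nonneg.2 (hL δ hδ))).neg
  rw [← posPart_sub_negPart d, map_sub]
  exact ((hpos _ (posPart_nonneg d)).sub (hpos _ (negPart_nonneg d))).isHermitian

lemma abs_mul_lamMax_le_specNorm [Nonempty (Fin m)] (hL : ∀ δ, 0 ≤ δ → L δ ≤ 0)
    {d : Fin n → ℝ} {k : Fin n} (hk : ∀ i, |d i| ≤ |d k|) :
    |d k| * lamMax (L (eVec' n k - eVec n k)) ≤ specNorm (L d) := by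
  wlog hdk : 0 ≤ d k generalizing d
  · simpa [specNorm_neg] using this (d := -d) (by simpa using hk) (by simp; linarith)
  have hδ := hL _ (nonneg_add_smul_eVec'_sub_eVec fun i => (neg_le_abs (d i)).trans
    ((hk i).trans (abs_of_nonneg hdk).le))
  rw [map_add, map_smul, ← le_neg_iff_add_nonpos_left] at hδ
  have hH := isHermitian_of_nonpos_of_nonneg hL
  calc |d k| * lamMax (L (eVec' n k - eVec n k))
      = lamMax (d k • L (eVec' n k - eVec n k)) := by
        rw [abs_of_nonneg hdk, lamMax_smul (hH _) hdk]
    _ ≤ lamMax (-L d) := lamMax_mono ((hH _).smul (IsSelfAdjoint.all _)) (hH d).neg hδ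
    _ ≤ specNorm (L d) := le_max_right _ _

end Nonincreasing

theorem stmt0_general {n m : ℕ} (hn : 2 ≤ n)
    (F' : (Fin n → ℝ) → (Fin n → ℝ) →L[ℝ] Matrix (Fin m) (Fin m) ℝ)
    (hmono : ∀ x, (∀ i, 0 < x i) → ∀ δ : Fin n → ℝ, 0 ≤ δ → Loewner (F' x δ) 0)
    (x : Fin n → ℝ) (hx : ∀ i, 0 < x i)
    (hcrit : ∀ j : Fin n, ¬ (-(F' x (eVec' n j - eVec n j))).PosSemidef) :
    0 < (⨅ j : Fin n, lamMax (F' x (eVec' n j - eVec n j))) ∧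
    (∀ d : Fin n → ℝ, d ≠ 0 →
      specNorm (F' x d) ≥ (⨅ j : Fin n, lamMax (F' x (eVec' n j - eVec n j))) * infNorm d) ∧
    Function.Injective (F' x) := by
  have : Nonempty (Fin n) := ⟨⟨0, by omega⟩⟩
  have : Nonempty (Fin m) := Matrix.nonempty_of_not_posSemidef (hcrit (Classical.arbitrary _))
  -- `Loewner A B` unfolds to `A ≤ B` in the `MatrixOrder` order.
  have hL : ∀ δ, 0 ≤ δ → (F' x).toLinearMap δ ≤ 0 := hmono x hx
  obtain ⟨j, hj⟩ :=
    exists_eq_ciInf_of_finite (f := fun j => lamMax (F' x (eVec' n j - eVec n j)))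
  set lam := ⨅ j : Fin n, lamMax (F' x (eVec' n j - eVec n j))
  have hlam : 0 < lam :=
    hj ▸ lamMax_pos_of_not_posSemidef_neg (isHermitian_of_nonpos_of_nonneg hL _) (hcrit j)
  have hbound : ∀ d, lam * infNorm d ≤ specNorm (F' x d) := fun d => by
    obtain ⟨k, hdk, hk⟩ := exists_infNorm_eq_abs d
    rw [hdk, mul_comm]
    exact (mul_le_mul_of_nonneg_left (ciInf_le (Set.finite_range _).bddBelow k)
      (abs_nonneg _)).trans (abs_mul_lamMax_le_specNorm hL hk)
  refine ⟨hlam, fun d _ => hbound d, (injective_iff_map_eq_zero _).2 fun d hd => ?_⟩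
  by_contra hne
  have hd_bound := hbound d
  rw [hd, specNorm_zero] at hd_bound
  linarith [mul_pos hlam (infNorm_pos hne)]

theorem stmt0 {n m : ℕ} (hn : 2 ≤ n) (hm : 2 ≤ m)
    (F : (Fin n → ℝ) → Matrix (Fin m) (Fin m) ℝ)
    (F' : (Fin n → ℝ) → (Fin n → ℝ) →L[ℝ] Matrix (Fin m) (Fin m) ℝ)
    (hdiff : ∀ x, (∀ i, 0 < x i) → HasFDerivAt F (F' x) x)
    (hcont : ContinuousOn F' {x | ∀ i, 0 < x i})
    (hsym : ∀ x, (F x).IsHermitian)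
    (hmono : ∀ x, (∀ i, 0 < x i) → ∀ δ : Fin n → ℝ, 0 ≤ δ → Loewner (F' x δ) 0)
    (hconv : ∀ x y, (∀ i, 0 < x i) → (∀ i, 0 < y i) →
      Loewner (F' x (y - x)) (F y - F x))
    (x : Fin n → ℝ) (hx : ∀ i, 0 < x i)
    (hcrit : ∀ j : Fin n, ¬ (-(F' x (eVec' n j - eVec n j))).PosSemidef) :
    0 < (⨅ j : Fin n, lamMax (F' x (eVec' n j - eVec n j))) ∧
    (∀ d : Fin n → ℝ, d ≠ 0 →
      specNorm (F' x d) ≥ (⨅ j : Fin n, lamMax (F' x (eVec' n j - eVec n j))) * infNorm d) ∧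
    Function.Injective (F' x) :=
  stmt0_general hn F' hmono x hx hcrit
end

section
/- Let F : ℝⁿ₊ → S^m (n, m ≥ 2) be continuously differentiable, convex and monotonically non-increasing, let 0 < a ≤ b, C > 0, and define d_j := ((2b−a)/a)·C·e_j' − (1/2)·e_j ∈ ℝⁿ. Then for all j ∈ {1,…,n} and all x ∈ [a,b]ⁿ there exists t ∈ [a + a/(2C), b + a/(2C)] such that for all δ with 0 ≤ δ ≤ a/(4C): F'(x)(C·e_j' − e_j) ⪰ F'((a/2)·e_j' + (t − δ)·e_j) d_j in the Loewner order. -/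
open Matrix

attribute [local instance] Matrix.frobeniusNormedAddCommGroup Matrix.frobeniusNormedSpace

/-!
With `y := (a/2) e_j' + (t - δ) e_j` and `t := x_j + a/(2C)`, the direction `(2C/a)(x - y)` lies
componentwise between `C e_j' - e_j` and `d_j`. Monotonicity of `F` turns this into
`F'(y) d_j ⪯ F'(y)((2C/a)(x - y))` and `F'(x)((2C/a)(x - y)) ⪯ F'(x)(C e_j' - e_j)`, while adding
the two first-order convexity inequalities at `x` and `y` gives the monotonicity of the gradient,
`F'(y)(x - y) ⪯ F'(x)(x - y)`, which links the two.
-/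

local infix:50 " ⪯ " => Loewner

section Loewner

variable {m : ℕ} {A B D : Matrix (Fin m) (Fin m) ℝ}

lemma Loewner.trans (hAB : A ⪯ B) (hBD : B ⪯ D) : A ⪯ D := by
  simpa [Loewner] using hBD.add hAB

instance : @Trans (Matrix (Fin m) (Fin m) ℝ) _ _ Loewner Loewner Loewner :=
  ⟨Loewner.trans⟩

lemma Loewner.smul (h : A ⪯ B) {c : ℝ} (hc : 0 ≤ c) : c • A ⪯ c • B := by
  rw [Loewner, ← smul_sub]
  exact Matrix.PosSemidef.smul h hc

lemma loewner_map_of_le {E G : Type*} [AddCommGroup E] [PartialOrder E] [IsOrderedAddMonoid E]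
    [FunLike G E (Matrix (Fin m) (Fin m) ℝ)] [AddMonoidHomClass G E (Matrix (Fin m) (Fin m) ℝ)]
    {L : G} (hL : ∀ δ, 0 ≤ δ → L δ ⪯ 0) {d₁ d₂ : E} (hd : d₂ ≤ d₁) :
    L d₁ ⪯ L d₂ := by
  simpa [Loewner, map_sub] using hL (d₁ - d₂) (sub_nonneg.2 hd)

lemma loewner_fderiv_apply_sub_of_convex {E : Type*} [AddCommGroup E] [Module ℝ E]
    [TopologicalSpace E] {F : E → Matrix (Fin m) (Fin m) ℝ}
    {F' : E → E →L[ℝ] Matrix (Fin m) (Fin m) ℝ} {x y : E}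
    (hxy : F' x (y - x) ⪯ F y - F x) (hyx : F' y (x - y) ⪯ F x - F y) :
    F' y (x - y) ⪯ F' x (x - y) := by
  have hsum : F' x (x - y) - F' y (x - y) =
      (F y - F x - F' x (y - x)) + (F x - F y - F' y (x - y)) := by
    rw [← neg_sub x y, map_neg]
    abel
  rw [Loewner, hsum]
  exact hxy.add hyx

end Loewner

section Coordinates

variable {n : ℕ} {j : Fin n}

lemma eVec_apply (i : Fin n) : eVec n j i = if i = j then 1 else 0 :=
  Pi.single_apply j 1 i

lemma eVec'_apply (i : Fin n) : eVec' n j i = if i = j then 0 else 1 := by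
  rw [eVec', eVec_apply]
  split_ifs <;> norm_num

variable {a C δ : ℝ} {x : Fin n → ℝ}

lemma pos_smul_eVec'_add_smul_eVec (ha : 0 < a) (hC : 0 < C) (hx : a ≤ x j)
    (hδ : δ ≤ a / (4 * C)) (i : Fin n) :
    0 < ((a / 2) • eVec' n j + (x j + a / (2 * C) - δ) • eVec n j) i := by
  have hquarter : a / (4 * C) < a / (2 * C) :=
    div_lt_div_of_pos_left ha (by positivity) (by linarith)
  simp only [Pi.add_apply, Pi.smul_apply, smul_eq_mul, eVec_apply, eVec'_apply]
  split_ifs <;> linarith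

lemma smul_eVec'_sub_eVec_le (ha : 0 < a) (hC : 0 < C) (hδ : 0 ≤ δ) (hx : ∀ i, a ≤ x i) :
    C • eVec' n j - eVec n j ≤
      (2 * C / a) • (x - ((a / 2) • eVec' n j + (x j + a / (2 * C) - δ) • eVec n j)) := by
  intro i
  simp only [Pi.sub_apply, Pi.add_apply, Pi.smul_apply, smul_eq_mul, eVec_apply, eVec'_apply]
  split_ifs with hij
  · subst hij
    field_simp
    nlinarith
  · field_simp
    nlinarith [hx i]

lemma smul_sub_le_smul_eVec'_sub_smul_eVec {b : ℝ} (ha : 0 < a) (hC : 0 < C)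
    (hδ : δ ≤ a / (4 * C)) (hx : ∀ i, x i ≤ b) :
    (2 * C / a) • (x - ((a / 2) • eVec' n j + (x j + a / (2 * C) - δ) • eVec n j)) ≤
      ((2 * b - a) / a * C) • eVec' n j - (1 / 2 : ℝ) • eVec n j := by
  intro i
  simp only [Pi.sub_apply, Pi.add_apply, Pi.smul_apply, smul_eq_mul, eVec_apply, eVec'_apply]
  rw [le_div_iff₀ (by positivity)] at hδ
  split_ifs with hij
  · subst hij
    field_simp
    nlinarith
  · field_simp
    nlinarith [hx i]

end Coordinates

theorem stmt3_general {n m : ℕ}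
    (F : (Fin n → ℝ) → Matrix (Fin m) (Fin m) ℝ)
    (F' : (Fin n → ℝ) → (Fin n → ℝ) →L[ℝ] Matrix (Fin m) (Fin m) ℝ)
    (hmono : ∀ z, (∀ i, 0 < z i) → ∀ δ : Fin n → ℝ, 0 ≤ δ → Loewner (F' z δ) 0)
    (hconv : ∀ z w, (∀ i, 0 < z i) → (∀ i, 0 < w i) →
      Loewner (F' z (w - z)) (F w - F z))
    (a b C : ℝ) (ha : 0 < a) (hC : 0 < C)
    (j : Fin n) (x : Fin n → ℝ) (hx : ∀ i, x i ∈ Set.Icc a b) :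
    ∃ t ∈ Set.Icc (a + a / (2 * C)) (b + a / (2 * C)),
      ∀ δ : ℝ, 0 ≤ δ → δ ≤ a / (4 * C) →
        Loewner
          (F' ((a / 2) • eVec' n j + (t - δ) • eVec n j)
            (((2 * b - a) / a * C) • eVec' n j - (1 / 2 : ℝ) • eVec n j))
          (F' x (C • eVec' n j - eVec n j)) := by
  refine ⟨x j + a / (2 * C), ⟨by linarith [(hx j).1], by linarith [(hx j).2]⟩,
    fun δ hδ₀ hδ₁ => ?_⟩
  set y := (a / 2) • eVec' n j + (x j + a / (2 * C) - δ) • eVec n j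
  have hxpos : ∀ i, 0 < x i := fun i => ha.trans_le (hx i).1
  have hypos : ∀ i, 0 < y i := pos_smul_eVec'_add_smul_eVec ha hC (hx j).1 hδ₁
  have hgrad : F' y (x - y) ⪯ F' x (x - y) :=
    loewner_fderiv_apply_sub_of_convex (hconv x y hxpos hypos) (hconv y x hypos hxpos)
  calc F' y (((2 * b - a) / a * C) • eVec' n j - (1 / 2 : ℝ) • eVec n j)
    _ ⪯ F' y ((2 * C / a) • (x - y)) :=
      loewner_map_of_le (hmono y hypos)
        (smul_sub_le_smul_eVec'_sub_smul_eVec ha hC hδ₁ fun i => (hx i).2)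
    _ ⪯ F' x ((2 * C / a) • (x - y)) := by
      simpa only [map_smul] using hgrad.smul (by positivity : 0 ≤ 2 * C / a)
    _ ⪯ F' x (C • eVec' n j - eVec n j) :=
      loewner_map_of_le (hmono x hxpos) (smul_eVec'_sub_eVec_le ha hC hδ₀ fun i => (hx i).1)

theorem stmt3 {n m : ℕ} (hn : 2 ≤ n) (hm : 2 ≤ m)
    (F : (Fin n → ℝ) → Matrix (Fin m) (Fin m) ℝ)
    (F' : (Fin n → ℝ) → (Fin n → ℝ) →L[ℝ] Matrix (Fin m) (Fin m) ℝ)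
    (hdiff : ∀ z, (∀ i, 0 < z i) → HasFDerivAt F (F' z) z)
    (hcont : ContinuousOn F' {z | ∀ i, 0 < z i})
    (hsym : ∀ z, (F z).IsHermitian)
    (hmono : ∀ z, (∀ i, 0 < z i) → ∀ δ : Fin n → ℝ, 0 ≤ δ → Loewner (F' z δ) 0)
    (hconv : ∀ z w, (∀ i, 0 < z i) → (∀ i, 0 < w i) →
      Loewner (F' z (w - z)) (F w - F z))
    (a b C : ℝ) (ha : 0 < a) (hab : a ≤ b) (hC : 0 < C)
    (j : Fin n) (x : Fin n → ℝ) (hx : ∀ i, x i ∈ Set.Icc a b) :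
    ∃ t ∈ Set.Icc (a + a / (2 * C)) (b + a / (2 * C)),
      ∀ δ : ℝ, 0 ≤ δ → δ ≤ a / (4 * C) →
        Loewner
          (F' ((a / 2) • eVec' n j + (t - δ) • eVec n j)
            (((2 * b - a) / a * C) • eVec' n j - (1 / 2 : ℝ) • eVec n j))
          (F' x (C • eVec' n j - eVec n j)) :=
  stmt3_general F F' hmono hconv a b C ha hC j x hx
end

section
/- Let F : ℝⁿ₊ → S^m be differentiable, monotonically non-increasing and convex (in the Loewner sense), and suppose that for all x ∈ [a,b]ⁿ and all j ∈ {1,…,n}, F'(x)((n−1)e_j' − e_j) is not negative semidefinite (0 < a ≤ b). Then for x, y ∈ [a,b]ⁿ with x ≠ y: F(y) ⪯ F(x) implies Σᵢ₌₁ⁿ (yᵢ − xᵢ) > 0. -/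
open Matrix

attribute [local instance] Matrix.frobeniusNormedAddCommGroup Matrix.frobeniusNormedSpace

/-!
Suppose `F y ⪯ F x`, `y ≠ x` and `∑ (yᵢ - xᵢ) ≤ 0`, and put `d = y - x`. Some coordinate of `d`
is negative; let `d j = -t < 0` be the smallest one. Every other coordinate is then at most
`(n - 1) t`, since the sum is nonpositive, so `d ≤ t v` componentwise for
`v = (n - 1) e_j' - e_j`. Monotonicity gives `F'(x)(t v) ⪯ F'(x) d`, and convexity gives
`F'(x) d ⪯ F y - F x ⪯ 0`. Hence `F'(x) v ⪯ 0`, contradicting the hypothesis on `F'`.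
-/

-- In this order `Loewner A B` is definitionally `A ≤ B`.
open scoped MatrixOrder

section SumNonpos

variable {ι : Type*} [Fintype ι] {d : ι → ℝ}

lemma exists_neg_of_sum_nonpos (hd : d ≠ 0) (hsum : ∑ i, d i ≤ 0) : ∃ i, d i < 0 := by
  by_contra! hnonneg
  have hzero : ∀ i ∈ Finset.univ, d i = 0 :=
    (Finset.sum_eq_zero_iff_of_nonneg fun i _ => hnonneg i).1
      (le_antisymm hsum (Finset.sum_nonneg fun i _ => hnonneg i))
  exact hd (funext fun i => hzero i (Finset.mem_univ i))

lemma le_card_sub_one_mul_of_sum_nonpos {t : ℝ} (hsum : ∑ i, d i ≤ 0) (hlow : ∀ i, -t ≤ d i)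
    (i : ι) : d i ≤ (Fintype.card ι - 1) * t := by
  classical
  have hrest : -((Fintype.card ι - 1) * t) ≤ ∑ k ∈ Finset.univ.erase i, d k := by
    calc -((Fintype.card ι - 1) * t) = ∑ _k ∈ Finset.univ.erase i, -t := by
          rw [Finset.sum_const, Finset.card_erase_of_mem (Finset.mem_univ i), nsmul_eq_mul,
            Finset.card_univ, Nat.cast_pred (Fintype.card_pos_iff.2 ⟨i⟩)]
          ring
      _ ≤ ∑ k ∈ Finset.univ.erase i, d k := Finset.sum_le_sum fun k _ => hlow k
  linarith [Finset.add_sum_erase Finset.univ d (Finset.mem_univ i)]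

end SumNonpos

lemma smul_eVec'_sub_eVec_apply (n : ℕ) (j i : Fin n) :
    (((n : ℝ) - 1) • eVec' n j - eVec n j) i = if i = j then -1 else (n : ℝ) - 1 := by
  split_ifs with h
  · simp [h, eVec', eVec]
  · simp [eVec', eVec, Pi.single_eq_of_ne h]

lemma exists_pos_le_smul_smul_eVec'_sub_eVec {n : ℕ} {d : Fin n → ℝ} (hd : d ≠ 0)
    (hsum : ∑ i, d i ≤ 0) :
    ∃ j : Fin n, ∃ t : ℝ, 0 < t ∧ d ≤ t • (((n : ℝ) - 1) • eVec' n j - eVec n j) := by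
  obtain ⟨i₀, hi₀⟩ := exists_neg_of_sum_nonpos hd hsum
  obtain ⟨j, -, hj⟩ := Finset.exists_min_image Finset.univ d ⟨i₀, Finset.mem_univ i₀⟩
  have hmin : ∀ i, -(-d j) ≤ d i := fun i => by simpa using hj i (Finset.mem_univ i)
  refine ⟨j, -d j, by linarith [hj i₀ (Finset.mem_univ i₀)], fun i => ?_⟩
  rw [Pi.smul_apply, smul_eVec'_sub_eVec_apply, smul_eq_mul]
  split_ifs with h
  · simp [h]
  · simpa [mul_comm] using le_card_sub_one_mul_of_sum_nonpos hsum hmin i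

lemma map_nonpos_of_le_of_map_nonpos {E M G : Type*} [AddCommGroup E] [PartialOrder E]
    [IsOrderedAddMonoid E] [AddCommGroup M] [PartialOrder M] [IsOrderedAddMonoid M]
    [FunLike G E M] [AddMonoidHomClass G E M] (L : G) (hanti : ∀ δ, 0 ≤ δ → L δ ≤ 0) {d w : E} (hd : L d ≤ 0) (hdw : d ≤ w) :
    L w ≤ 0 := by
  have hsplit : L w = L d + L (w - d) := by rw [← map_add, add_sub_cancel]
  rw [hsplit]
  exact add_nonpos hd (hanti _ (sub_nonneg.2 hdw))

theorem stmt15_general {n m : ℕ}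
    (F : (Fin n → ℝ) → Matrix (Fin m) (Fin m) ℝ)
    (F' : (Fin n → ℝ) → (Fin n → ℝ) →L[ℝ] Matrix (Fin m) (Fin m) ℝ)
    (hmono : ∀ z, (∀ i, 0 < z i) → ∀ δ : Fin n → ℝ, 0 ≤ δ → Loewner (F' z δ) 0)
    (hconv : ∀ z w, (∀ i, 0 < z i) → (∀ i, 0 < w i) →
      Loewner (F' z (w - z)) (F w - F z))
    (a b : ℝ) (ha : 0 < a)
    (hcrit : ∀ x : Fin n → ℝ, (∀ i, x i ∈ Set.Icc a b) → ∀ j : Fin n,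
      ¬ (-(F' x (((n : ℝ) - 1) • eVec' n j - eVec n j))).PosSemidef) :
    ∀ x y : Fin n → ℝ, (∀ i, x i ∈ Set.Icc a b) → (∀ i, y i ∈ Set.Icc a b) →
      x ≠ y → Loewner (F y) (F x) → 0 < ∑ i, (y i - x i) := by
  intro x y hx hy hxy hFyx
  by_contra! hsum
  have hxpos : ∀ i, 0 < x i := fun i => ha.trans_le (hx i).1
  have hypos : ∀ i, 0 < y i := fun i => ha.trans_le (hy i).1
  obtain ⟨j, t, ht, hle⟩ := exists_pos_le_smul_smul_eVec'_sub_eVec (sub_ne_zero.2 hxy.symm) hsum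
  have hdir : F' x (y - x) ≤ 0 :=
    (show F' x (y - x) ≤ F y - F x from hconv x y hxpos hypos).trans (sub_nonpos.2 hFyx)
  have hscaled := map_nonpos_of_le_of_map_nonpos (F' x) (hmono x hxpos) hdir hle
  rw [map_smul, smul_nonpos_iff_nonpos_of_pos_left ht, Matrix.le_iff, zero_sub] at hscaled
  exact hcrit x hx j hscaled

theorem stmt15 {n m : ℕ} (hn : 2 ≤ n) (hm : 2 ≤ m)
    (F : (Fin n → ℝ) → Matrix (Fin m) (Fin m) ℝ)
    (F' : (Fin n → ℝ) → (Fin n → ℝ) →L[ℝ] Matrix (Fin m) (Fin m) ℝ)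
    (hdiff : ∀ z, (∀ i, 0 < z i) → HasFDerivAt F (F' z) z)
    (hsym : ∀ z, (F z).IsHermitian)
    (hmono : ∀ z, (∀ i, 0 < z i) → ∀ δ : Fin n → ℝ, 0 ≤ δ → Loewner (F' z δ) 0)
    (hconv : ∀ z w, (∀ i, 0 < z i) → (∀ i, 0 < w i) →
      Loewner (F' z (w - z)) (F w - F z))
    (a b : ℝ) (ha : 0 < a) (hab : a ≤ b)
    (hcrit : ∀ x : Fin n → ℝ, (∀ i, x i ∈ Set.Icc a b) → ∀ j : Fin n,
      ¬ (-(F' x (((n : ℝ) - 1) • eVec' n j - eVec n j))).PosSemidef) :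
    ∀ x y : Fin n → ℝ, (∀ i, x i ∈ Set.Icc a b) → (∀ i, y i ∈ Set.Icc a b) →
      x ≠ y → Loewner (F y) (F x) → 0 < ∑ i, (y i - x i) :=
  stmt15_general F F' hmono hconv a b ha hcrit
end
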